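/- Let $X$ be a well-behaved chronological space which is a Polish space, and let $\mu$ be a finite non-atomic strictly positive Borel measure on $X$. Define $\delta_\mu(A, B) := \mu(\Delta(A, B))$ for $A, B \in IP(X)$, where $\Delta(A,B)$ is the symmetric difference. Then $\delta_\mu$ is a metric on $IP(X)$; in particular, for two distinct open past sets $A \neq B$, the set $(A \setminus \mathrm{cl}(B)) \cup (B \setminus \mathrm{cl}(A))$ is nonempty and open, so $\delta_\mu(A, B) > 0$. -/

import Mathlib

open Set MeasureTheory unitInterval

variable {X : Type*}

def Iminus (ll : X → X → Prop) (A : Set X) : Set X := {x | ∃ a ∈ A, ll x a}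

def Iplus (ll : X → X → Prop) (A : Set X) : Set X := {x | ∃ a ∈ A, ll a x}

def futureOf (ll : X → X → Prop) (p : X) : Set X := {y | ll p y}

def pastOf (ll : X → X → Prop) (p : X) : Set X := {y | ll y p}

def IsPast (ll : X → X → Prop) (A : Set X) : Prop := A = Iminus ll A

def IsFuture (ll : X → X → Prop) (A : Set X) : Prop := A = Iplus ll A

def IndecPast (ll : X → X → Prop) (A : Set X) : Prop :=
  ¬ ∃ B C : Set X, IsPast ll B ∧ IsPast ll C ∧ B ⊂ A ∧ C ⊂ A ∧ B ∪ C = A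

def IndecFuture (ll : X → X → Prop) (A : Set X) : Prop :=
  ¬ ∃ B C : Set X, IsFuture ll B ∧ IsFuture ll C ∧ B ⊂ A ∧ C ⊂ A ∧ B ∪ C = A

def IsIP (ll : X → X → Prop) (A : Set X) : Prop :=
  A.Nonempty ∧ IsPast ll A ∧ IndecPast ll A

def IsChronSet (ll : X → X → Prop) : Prop :=
  Transitive ll ∧ Irreflexive ll ∧ (∀ x, ∃ y, ll x y ∨ ll y x) ∧
    ∃ S : Set X, S.Countable ∧ ∀ x y, ll x y → ∃ s ∈ S, ll x s ∧ ll s y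


lemma past_subset_of_subset_closure {X : Type*} [TopologicalSpace X] (ll : X → X → Prop)
    (hfut : ∀ p : X, IsOpen (futureOf ll p)) {A B : Set X}
    (hA : IsPast ll A) (hB : IsPast ll B) (hAB : A ⊆ closure B) : A ⊆ B := by
  intro x hx
  have hx' : x ∈ Iminus ll A := hA ▸ hx
  obtain ⟨a, haA, hxa⟩ := hx'
  have ha : a ∈ closure B := hAB haA
  have hmem : a ∈ futureOf ll x := hxa
  obtain ⟨b, hbB, hbf⟩ := (mem_closure_iff.mp ha) _ (hfut x) hmem
  exact hB ▸ ⟨b, hbf, hbB⟩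

lemma past_isOpen {X : Type*} [TopologicalSpace X] (ll : X → X → Prop)
    (hpast : ∀ p : X, IsOpen (pastOf ll p)) {A : Set X} (hA : IsPast ll A) : IsOpen A := by
  have : A = ⋃ a ∈ A, pastOf ll a := by
    ext x
    simp only [Set.mem_iUnion, pastOf, Set.mem_setOf_eq]
    constructor
    · intro hx
      have := hA ▸ hx
      obtain ⟨a, haA, hxa⟩ := this
      exact ⟨a, haA, hxa⟩
    · rintro ⟨a, haA, hxa⟩
      exact hA ▸ ⟨a, haA, hxa⟩
  rw [this]
  exact isOpen_biUnion fun a _ => hpast a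

/-- On a well-behaved chronological Polish space (here: a proper, hence Polish,
locally path-connected metric space with a regular path-generated chronology),
with a finite non-atomic strictly positive Borel measure `μ`, the map
`δ_μ(A,B) = μ(A ∆ B)` is a metric on `IP(X)`; in particular, for distinct open
past sets `A ≠ B`, the set `(A \ cl B) ∪ (B \ cl A)` is nonempty and open, so
`δ_μ(A,B) > 0`. -/
theorem deltaMu_metric [MetricSpace X] [ProperSpace X] [LocallyPathConnectedSpace X]
    [MeasurableSpace X] [BorelSpace X] (ll : X → X → Prop)
    (h : IsChronSet ll)
    (hreg : ∀ p : X, IsOpen (futureOf ll p) ∧ IsOpen (pastOf ll p) ∧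
      IndecFuture ll (futureOf ll p) ∧ IndecPast ll (pastOf ll p))
    (hpath : ∀ p q : X, ll p q → ∃ c : unitInterval → X, Continuous c ∧
      c 0 = p ∧ c 1 = q ∧ ∀ s t : unitInterval, s < t → ll (c s) (c t))
    (μ : Measure X) [IsFiniteMeasure μ]
    (hna : ∀ x : X, μ {x} = 0)
    (hpos : ∀ U : Set X, IsOpen U → U.Nonempty → 0 < μ U) :
    (∀ A B : Set X, IsOpen A → IsOpen B → IsPast ll A → IsPast ll B → A ≠ B →
      ((A \ closure B) ∪ (B \ closure A)).Nonempty ∧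
        IsOpen ((A \ closure B) ∪ (B \ closure A)) ∧ 0 < μ (symmDiff A B)) ∧
    (∀ A B : Set X, IsIP ll A → IsIP ll B → (μ (symmDiff A B) = 0 ↔ A = B)) ∧
    (∀ A B : Set X, μ (symmDiff A B) = μ (symmDiff B A)) ∧
    (∀ A B C : Set X, IsIP ll A → IsIP ll B → IsIP ll C →
      μ (symmDiff A C) ≤ μ (symmDiff A B) + μ (symmDiff B C)) := by
  have hfut : ∀ p : X, IsOpen (futureOf ll p) := fun p => (hreg p).1
  have hpst : ∀ p : X, IsOpen (pastOf ll p) := fun p => (hreg p).2.1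
  have main : ∀ A B : Set X, IsPast ll A → IsPast ll B → A ≠ B →
      ((A \ closure B) ∪ (B \ closure A)).Nonempty ∧
        IsOpen ((A \ closure B) ∪ (B \ closure A)) ∧ 0 < μ (symmDiff A B) := by
    intro A B hA hB hne
    have hoA : IsOpen A := past_isOpen ll hpst hA
    have hoB : IsOpen B := past_isOpen ll hpst hB
    have hNE : ((A \ closure B) ∪ (B \ closure A)).Nonempty := by
      by_contra hemp
      rw [Set.not_nonempty_iff_eq_empty, Set.union_empty_iff] at hemp
      have h1 : A ⊆ closure B := by
        intro x hx
        by_contra hc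
        exact (Set.eq_empty_iff_forall_notMem.mp hemp.1 x) ⟨hx, hc⟩
      have h2 : B ⊆ closure A := by
        intro x hx
        by_contra hc
        exact (Set.eq_empty_iff_forall_notMem.mp hemp.2 x) ⟨hx, hc⟩
      exact hne (Set.Subset.antisymm
        (past_subset_of_subset_closure ll hfut hA hB h1)
        (past_subset_of_subset_closure ll hfut hB hA h2))
    have hOp : IsOpen ((A \ closure B) ∪ (B \ closure A)) :=
      ((hoA.sdiff isClosed_closure).union (hoB.sdiff isClosed_closure))
    refine ⟨hNE, hOp, ?_⟩
    have hsub : (A \ closure B) ∪ (B \ closure A) ⊆ symmDiff A B := by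
      rw [Set.symmDiff_def]
      apply Set.union_subset_union <;>
        exact Set.diff_subset_diff_right subset_closure
    exact lt_of_lt_of_le (hpos _ hOp hNE) (measure_mono hsub)
  refine ⟨fun A B _ _ hA hB hne => main A B hA hB hne, ?_, ?_, ?_⟩
  · intro A B hA hB
    constructor
    · intro hz
      by_contra hne
      exact absurd hz (main A B hA.2.1 hB.2.1 hne).2.2.ne'
    · rintro rfl
      simp [symmDiff_self]
  · intro A B; rw [symmDiff_comm]
  · intro A B C _ _ _
    calc μ (symmDiff A C) ≤ μ (symmDiff A B ∪ symmDiff B C) :=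
          measure_mono (symmDiff_triangle A B C)
      _ ≤ μ (symmDiff A B) + μ (symmDiff B C) := measure_union_le _ _
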